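/- Let H, F, N, r₀ be real numbers with H ≠ 0, r₀ > 0, F² ≤ 1, N ≠ 0, δ ≥ 0 and r₀(F−1)/2 ≤ HN ≤ r₀(F+1)/2. Then P₁ > 0; in particular every P ∈ ℝ with P ≥ 0 and Ξ(P) ≥ 0 satisfies P > 0. -/
import Mathlib


/-- The concave quadratic `Ξ(P) = -H²P² + (r₀(1-F²) + 2HFN)P - N²`. -/
def Xi (H F N r0 P : ℝ) : ℝ :=
  -H ^ 2 * P ^ 2 + (r0 * (1 - F ^ 2) + 2 * H * F * N) * P - N ^ 2

/-- The discriminant quantity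
`δ = (1-F²)(r₀(1+F) - 2HN)(r₀(1-F) + 2HN)`. -/
def srDelta (H F N r0 : ℝ) : ℝ :=
  (1 - F ^ 2) * (r0 * (1 + F) - 2 * H * N) * (r0 * (1 - F) + 2 * H * N)

/-- The smaller root `P₁` of `Ξ`. -/
noncomputable def srP1 (H F N r0 : ℝ) : ℝ :=
  ((2 * H * F * N + r0 * (1 - F ^ 2)) - Real.sqrt (srDelta H F N r0)) /
    (2 * H ^ 2)

/-- Under `H ≠ 0`, `r₀ > 0`, `F² ≤ 1`, `N ≠ 0`, `δ ≥ 0` and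
`r₀(F-1)/2 ≤ HN ≤ r₀(F+1)/2`, one has `P₁ > 0`; in particular every `P ≥ 0`
with `Ξ(P) ≥ 0` is strictly positive. -/
theorem stmt_19 (H F N r0 : ℝ) (hH : H ≠ 0) (hr0 : 0 < r0) (hF : F ^ 2 ≤ 1)
    (hN : N ≠ 0) (hδ : 0 ≤ srDelta H F N r0)
    (hlo : r0 * (F - 1) / 2 ≤ H * N) (hhi : H * N ≤ r0 * (F + 1) / 2) :
    0 < srP1 H F N r0 ∧
      ∀ P : ℝ, 0 ≤ P → 0 ≤ Xi H F N r0 P → 0 < P := by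
  have hH2 : 0 < H ^ 2 := by positivity
  have hN2 : 0 < N ^ 2 := by positivity
  set b : ℝ := 2 * H * F * N + r0 * (1 - F ^ 2) with hb
  have hδb : srDelta H F N r0 = b ^ 2 - 4 * H ^ 2 * N ^ 2 := by
    simp only [srDelta, hb]; ring
  have hbpos : 0 < b := by
    have hb0 : 0 ≤ b := by
      rcases le_or_gt 0 F with hF0 | hF0
      · nlinarith [mul_le_mul_of_nonneg_left hlo hF0]
      · nlinarith [mul_le_mul_of_nonpos_left hhi hF0.le]
    rcases hb0.lt_or_eq with h | h
    · exact h
    · exfalso; nlinarith [hδ, hδb]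
  have hlt : Real.sqrt (srDelta H F N r0) < b := by
    have h1 : srDelta H F N r0 < b ^ 2 := by nlinarith [hδb]
    have := Real.sqrt_lt_sqrt hδ h1
    rwa [Real.sqrt_sq hbpos.le] at this
  constructor
  · have : 0 < b - Real.sqrt (srDelta H F N r0) := by linarith
    unfold srP1
    have : (2 * H * F * N + r0 * (1 - F ^ 2)) - Real.sqrt (srDelta H F N r0) = b - Real.sqrt (srDelta H F N r0) := by rw [hb]
    rw [this]
    positivity
  · intro P hP hXi
    rcases hP.lt_or_eq with h | h
    · exact h
    · exfalso
      rw [← h] at hXi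
      simp [Xi] at hXi
      nlinarith
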